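/- For every bounded self-adjoint operator H on a complex Hilbert space 𝓗, every unit vector ψ, every λ ∈ ℝ and every ε > 0, the inequality 𝒯(H,ψ) ≥ (1/ε)·(2ε·Im⟨ψ, (H − λ − iε)⁻¹ ψ⟩)² is always strict whenever 𝒯(H,ψ) is finite; i.e. equality can never hold for a bounded (hence semibounded) Hamiltonian. -/

import Mathlib

open MeasureTheory Complex
open scoped ENNReal

variable {𝓗 : Type*} [NormedAddCommGroup 𝓗] [InnerProductSpace ℂ 𝓗] [CompleteSpace 𝓗]

/-- The unitary group `e^{-iHt}` generated by a bounded operator `H`,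
defined via the exponential series. -/
noncomputable def timeEvolution (H : 𝓗 →L[ℂ] 𝓗) (t : ℝ) : 𝓗 →L[ℂ] 𝓗 :=
  NormedSpace.exp ((-(Complex.I * (t : ℂ))) • H)

/-- The sojourn time `𝒯(H,ψ) = ∫_ℝ |⟨ψ, e^{-iHt}ψ⟩|² dt ∈ [0,∞]`. -/
noncomputable def sojournTime (H : 𝓗 →L[ℂ] 𝓗) (ψ : 𝓗) : ℝ≥0∞ :=
  ∫⁻ t : ℝ, ENNReal.ofReal (‖(inner ℂ ψ (timeEvolution H t ψ) : ℂ)‖ ^ 2)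

/-- The resolvent `R(z) = (H - z)⁻¹` (via `Ring.inverse`; for self-adjoint `H`
and `Im z ≠ 0` the operator `H - z` is invertible and this is its genuine inverse). -/
noncomputable def resolventOp (H : 𝓗 →L[ℂ] 𝓗) (z : ℂ) : 𝓗 →L[ℂ] 𝓗 :=
  Ring.inverse (H - z • 1)

/-!
Write `a(t) = ⟨ψ, e^{-iHt} ψ⟩` and `z = λ + iε`. The resolvent is the Laplace transform
`⟨ψ, (H - z)⁻¹ ψ⟩ = i ∫₀^∞ e^{izt} a(t) dt`, and since `a(-t) = conj (a t)` this gives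
`2 Im ⟨ψ, (H - z)⁻¹ ψ⟩ = ∫_ℝ conj (k t) a(t) dt` with `k(t) = e^{-ε|t| - iλt}` and `‖k‖₂² = 1/ε`.
Cauchy–Schwarz in `L²(ℝ)` is then the inequality `𝒯(H,ψ) ≥ ε (2 Im ⟨ψ, (H - z)⁻¹ ψ⟩)²`, and equality
would make `a` a multiple of `k`. That is impossible: `a` is differentiable because `H` is bounded,
while `k` has a corner at `t = 0`.
-/

open Set Filter Topology
open scoped ComplexConjugate InnerProductSpace

namespace MeasureTheory.MemLp

variable {α E : Type*} [MeasurableSpace α] {μ : Measure α} [NormedAddCommGroup E]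

lemma norm_toLp_two_sq {f : α → E} (hf : MemLp f 2 μ) :
    ‖hf.toLp f‖ ^ 2 = ∫ x, ‖f x‖ ^ 2 ∂μ := by
  rw [Lp.norm_toLp, hf.eLpNorm_eq_integral_rpow_norm two_ne_zero ENNReal.ofNat_ne_top,
    ENNReal.toReal_ofReal (by positivity), ← Real.rpow_natCast, ← Real.rpow_mul
      (integral_nonneg fun _ => by positivity)]
  norm_num

lemma inner_toLp_two {𝕜 : Type*} [RCLike 𝕜] [InnerProductSpace 𝕜 E] {f g : α → E}
    (hf : MemLp f 2 μ) (hg : MemLp g 2 μ) :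
    ⟪hf.toLp f, hg.toLp g⟫_𝕜 = ∫ x, ⟪f x, g x⟫_𝕜 ∂μ := by
  rw [L2.inner_def]
  refine integral_congr_ae ?_
  filter_upwards [hf.coeFn_toLp, hg.coeFn_toLp] with x hfx hgx
  rw [hfx, hgx]

end MeasureTheory.MemLp

section

variable {α 𝕜 E : Type*} [MeasurableSpace α] {μ : Measure α} [RCLike 𝕜]
  [NormedAddCommGroup E] [InnerProductSpace 𝕜 E]

theorem norm_integral_inner_sq_lt {f g : α → E} (hf : MemLp f 2 μ) (hg : MemLp g 2 μ)
    (hf₀ : ¬ f =ᵐ[μ] 0) (hgf : ∀ r : 𝕜, ¬ g =ᵐ[μ] r • f) :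
    ‖∫ x, ⟪f x, g x⟫_𝕜 ∂μ‖ ^ 2 < (∫ x, ‖f x‖ ^ 2 ∂μ) * ∫ x, ‖g x‖ ^ 2 ∂μ := by
  have hF : hf.toLp f ≠ 0 := fun h => hf₀ ((MemLp.toLp_eq_toLp_iff hf .zero).mp h)
  have hG : hg.toLp g ≠ 0 := fun h =>
    hgf 0 (by simpa using (MemLp.toLp_eq_toLp_iff hg .zero).mp h)
  rw [← hf.inner_toLp_two hg, ← hf.norm_toLp_two_sq, ← hg.norm_toLp_two_sq, ← mul_pow]
  refine pow_lt_pow_left₀ ((norm_inner_le_norm _ _).lt_of_ne fun h => ?_) (norm_nonneg _)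
    two_ne_zero
  obtain ⟨r, -, hr⟩ := (norm_inner_eq_norm_iff hF hG).mp h
  rw [← MemLp.toLp_const_smul, MemLp.toLp_eq_toLp_iff] at hr
  exact hgf r hr

end

lemma integral_exp_neg_mul_abs {b : ℝ} (hb : 0 < b) : ∫ t, Real.exp (-b * |t|) = 2 / b := by
  rw [integral_comp_abs (f := fun t => Real.exp (-b * t)),
    integral_exp_mul_Ioi (neg_lt_zero.2 hb)]
  field_simp
  simp

lemma integrable_exp_neg_mul_abs {b : ℝ} (hb : 0 < b) :
    Integrable fun t => Real.exp (-b * |t|) :=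
  .of_integral_ne_zero (by rw [integral_exp_neg_mul_abs hb]; positivity)

lemma integral_eq_two_mul_re_integral_Ioi {g : ℝ → ℂ} (hg : Integrable g)
    (hg_neg : ∀ t, g (-t) = conj (g t)) :
    ∫ t, g t = (2 * (∫ t in Ioi 0, g t).re : ℝ) := by
  have hIic : ∫ t in Iic 0, g t = conj (∫ t in Ioi 0, g t) := by
    have hflip := integral_comp_neg_Ioi 0 g
    rw [neg_zero] at hflip
    simp_rw [← hflip, hg_neg, integral_conj]
  rw [← intervalIntegral.integral_Iic_add_Ioi hg.integrableOn hg.integrableOn, hIic, add_comm,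
    add_conj]

/-- `∫ e^{-iλ't} dμ(λ')` for the Cauchy distribution `μ` with center `λ` and half-width `ε`: the
autocorrelation of a state with that spectral measure. -/
noncomputable def cauchyAutocorrelation (lam ε t : ℝ) : ℂ :=
  cexp (-(ε * |t|) - I * lam * t)

section Cauchy

variable (lam ε : ℝ)

lemma continuous_cauchyAutocorrelation : Continuous (cauchyAutocorrelation lam ε) := by
  unfold cauchyAutocorrelation
  fun_prop

@[simp]
lemma cauchyAutocorrelation_zero : cauchyAutocorrelation lam ε 0 = 1 := by
  simp [cauchyAutocorrelation]

lemma norm_cauchyAutocorrelation (t : ℝ) :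
    ‖cauchyAutocorrelation lam ε t‖ = Real.exp (-ε * |t|) := by
  simp [cauchyAutocorrelation, Complex.norm_exp]

lemma cauchyAutocorrelation_neg (t : ℝ) :
    cauchyAutocorrelation lam ε (-t) = conj (cauchyAutocorrelation lam ε t) := by
  rw [cauchyAutocorrelation, cauchyAutocorrelation, ← Complex.exp_conj]
  congr 1
  simp

lemma conj_cauchyAutocorrelation_of_nonneg {t : ℝ} (ht : 0 ≤ t) :
    conj (cauchyAutocorrelation lam ε t) = cexp (I * (lam + ε * I) * t) := by
  rw [cauchyAutocorrelation, ← Complex.exp_conj]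
  congr 1
  simp only [map_sub, map_neg, map_mul, conj_ofReal, conj_I, abs_of_nonneg ht]
  linear_combination (-(ε : ℂ) * t) * I_sq

lemma norm_cauchyAutocorrelation_sq (t : ℝ) :
    ‖cauchyAutocorrelation lam ε t‖ ^ 2 = Real.exp (-(2 * ε) * |t|) := by
  rw [norm_cauchyAutocorrelation, ← Real.exp_nat_mul]
  ring_nf

lemma memLp_cauchyAutocorrelation (hε : 0 < ε) : MemLp (cauchyAutocorrelation lam ε) 2 := by
  rw [memLp_two_iff_integrable_sq_norm
    (continuous_cauchyAutocorrelation lam ε).aestronglyMeasurable]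
  simpa only [norm_cauchyAutocorrelation_sq] using integrable_exp_neg_mul_abs (by positivity)

lemma integral_norm_cauchyAutocorrelation_sq (hε : 0 < ε) :
    ∫ t, ‖cauchyAutocorrelation lam ε t‖ ^ 2 = 1 / ε := by
  simp only [norm_cauchyAutocorrelation_sq]
  rw [integral_exp_neg_mul_abs (by positivity)]
  field_simp

lemma cauchyAutocorrelation_not_ae_eq_zero :
    ¬ cauchyAutocorrelation lam ε =ᵐ[volume] 0 := fun h => by
  have := congrFun (((continuous_cauchyAutocorrelation lam ε).ae_eq_iff_eq volume
    continuous_const).1 h) 0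
  exact one_ne_zero ((cauchyAutocorrelation_zero lam ε).symm.trans this)

lemma not_differentiableAt_cauchyAutocorrelation_zero (hε : ε ≠ 0) :
    ¬ DifferentiableAt ℝ (cauchyAutocorrelation lam ε) 0 := by
  intro h
  have habs : (abs : ℝ → ℝ) =
      fun t => -Real.log (cauchyAutocorrelation lam ε t * cexp (I * lam * t)).re / ε := by
    funext t
    rw [cauchyAutocorrelation, ← Complex.exp_add, sub_add_cancel, ← ofReal_mul, ← ofReal_neg,
      exp_ofReal_re, Real.log_exp]
    field_simp
  apply not_differentiableAt_abs_zero
  rw [habs]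
  refine ((DifferentiableAt.log ?_ (by simp)).neg).div_const ε
  exact reCLM.differentiableAt.comp 0 (h.mul (by fun_prop))

end Cauchy

section Operator

variable {H : 𝓗 →L[ℂ] 𝓗}

variable (H) in
lemma timeEvolution_eq_exp_real_smul (t : ℝ) :
    timeEvolution H t = NormedSpace.exp (t • (-I • H)) := by
  rw [timeEvolution, RCLike.real_smul_eq_coe_smul (K := ℂ), smul_smul]
  congr 2
  simp [mul_comm]

variable (H) in
@[simp]
lemma timeEvolution_zero : timeEvolution H 0 = 1 := by
  simp [timeEvolution]

variable (H) in
lemma hasDerivAt_timeEvolution_apply (x : 𝓗) (t : ℝ) :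
    HasDerivAt (fun s => timeEvolution H s x) (-I • H (timeEvolution H t x)) t := by
  simp only [timeEvolution_eq_exp_real_smul]
  convert ((ContinuousLinearMap.apply ℂ 𝓗 x).restrictScalars ℝ).hasFDerivAt.comp_hasDerivAt t
    (hasDerivAt_exp_smul_const' (𝕂 := ℝ) (-I • H) t) using 1
  · rfl
  · simp

lemma timeEvolution_mem_unitary (hH : IsSelfAdjoint H) (t : ℝ) :
    timeEvolution H t ∈ unitary (𝓗 →L[ℂ] 𝓗) := by
  have hA : (-t : ℝ) • H ∈ selfAdjoint (𝓗 →L[ℂ] 𝓗) := (IsSelfAdjoint.all _).smul hH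
  have h : timeEvolution H t = NormedSpace.exp (I • (-t : ℝ) • H) := by
    rw [timeEvolution, RCLike.real_smul_eq_coe_smul (K := ℂ), smul_smul]
    congr 2
    simp
  simpa only [h, selfAdjoint.expUnitary_coe] using (selfAdjoint.expUnitary ⟨_, hA⟩).2

lemma norm_timeEvolution_apply (hH : IsSelfAdjoint H) (t : ℝ) (x : 𝓗) :
    ‖timeEvolution H t x‖ = ‖x‖ :=
  ContinuousLinearMap.norm_map_of_mem_unitary (timeEvolution_mem_unitary hH t) x

lemma star_timeEvolution (hH : IsSelfAdjoint H) (t : ℝ) :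
    star (timeEvolution H t) = timeEvolution H (-t) := by
  rw [timeEvolution, timeEvolution, NormedSpace.star_exp, star_smul, hH.star_eq]
  simp

lemma isUnit_sub_smul_one (hH : IsSelfAdjoint H) {z : ℂ} (hz : z.im ≠ 0) :
    IsUnit (H - z • 1) := by
  have hzσ : z ∉ spectrum ℂ H := fun h => hz (hH.im_eq_zero_of_mem_spectrum h)
  rw [spectrum.mem_iff, not_not, Algebra.algebraMap_eq_smul_one] at hzσ
  simpa using hzσ.neg

variable (H) in
lemma hasDerivAt_cexp_smul_timeEvolution_apply (z : ℂ) (x : 𝓗) (t : ℝ) :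
    HasDerivAt (fun s : ℝ => cexp (I * z * s) • timeEvolution H s x)
      (-I • (H - z • 1) (cexp (I * z * t) • timeEvolution H t x)) t := by
  have hexp : HasDerivAt (fun s : ℝ => cexp (I * z * s)) (cexp (I * z * t) * (I * z)) t := by
    simpa using ((hasDerivAt_id (t : ℂ)).const_mul (I * z)).cexp.comp_ofReal
  convert hexp.fun_smul (hasDerivAt_timeEvolution_apply H x t) using 1
  simp only [sub_apply, smul_apply, map_smul, one_apply_eq_self]
  module

lemma norm_cexp_smul_timeEvolution_apply (hH : IsSelfAdjoint H) (z : ℂ) (x : 𝓗) (t : ℝ) :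
    ‖cexp (I * z * t) • timeEvolution H t x‖ = Real.exp (-z.im * t) * ‖x‖ := by
  rw [norm_smul, norm_timeEvolution_apply hH, Complex.norm_exp]
  simp

lemma integrableOn_cexp_smul_timeEvolution_apply (hH : IsSelfAdjoint H) {z : ℂ} (hz : 0 < z.im)
    (x : 𝓗) : IntegrableOn (fun t : ℝ => cexp (I * z * t) • timeEvolution H t x) (Ioi 0) := by
  refine Integrable.mono' ((exp_neg_integrableOn_Ioi 0 hz).mul_const ‖x‖)
    (Continuous.aestronglyMeasurable ?_) (ae_of_all _ fun t => ?_)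
  · exact continuous_iff_continuousAt.2 fun t =>
      (hasDerivAt_cexp_smul_timeEvolution_apply H z x t).continuousAt
  · rw [norm_cexp_smul_timeEvolution_apply hH]

lemma resolventOp_apply_eq_integral (hH : IsSelfAdjoint H) {z : ℂ} (hz : 0 < z.im) (x : 𝓗) :
    resolventOp H z x = I • ∫ t in Ioi (0 : ℝ), cexp (I * z * t) • timeEvolution H t x := by
  set F := fun t : ℝ => cexp (I * z * t) • timeEvolution H t x
  have hF : IntegrableOn F (Ioi 0) := integrableOn_cexp_smul_timeEvolution_apply hH hz x
  have hF_lim : Tendsto F atTop (𝓝 0) := by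
    rw [tendsto_zero_iff_norm_tendsto_zero]
    simp only [F, norm_cexp_smul_timeEvolution_apply hH]
    simpa using (Real.tendsto_exp_atBot.comp
      (tendsto_id.const_mul_atTop_of_neg (neg_lt_zero.2 hz))).mul_const ‖x‖
  have hFTC : ∫ t in Ioi (0 : ℝ), -I • (H - z • 1) (F t) = 0 - F 0 :=
    integral_Ioi_of_hasDerivAt_of_tendsto'
      (fun t _ => hasDerivAt_cexp_smul_timeEvolution_apply H z x t)
      (((H - z • 1).integrable_comp hF).smul (-I)) hF_lim
  have hinv : (H - z • 1) (I • ∫ t in Ioi (0 : ℝ), F t) = x := by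
    rw [integral_smul] at hFTC
    rw [map_smul, ← (H - z • 1).integral_comp_comm hF, ← neg_neg I, neg_smul, hFTC]
    simp [F]
  rw [resolventOp, ← hinv]
  exact DFunLike.congr_fun (Ring.inverse_mul_cancel _ (isUnit_sub_smul_one hH hz.ne')) _

variable (H) in
noncomputable def autocorrelation (ψ : 𝓗) (t : ℝ) : ℂ :=
  ⟪ψ, timeEvolution H t ψ⟫_ℂ

variable (H) in
lemma differentiable_autocorrelation (ψ : 𝓗) : Differentiable ℝ (autocorrelation H ψ) :=
  fun t => (((innerSL ℂ ψ).restrictScalars ℝ).hasFDerivAt.comp_hasDerivAt t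
    (hasDerivAt_timeEvolution_apply H ψ t)).differentiableAt

variable (H) in
@[simp]
lemma autocorrelation_zero (ψ : 𝓗) : autocorrelation H ψ 0 = ‖ψ‖ ^ 2 := by
  simp [autocorrelation, inner_self_eq_norm_sq_to_K]

lemma autocorrelation_neg (hH : IsSelfAdjoint H) (ψ : 𝓗) (t : ℝ) :
    autocorrelation H ψ (-t) = conj (autocorrelation H ψ t) := by
  rw [autocorrelation, autocorrelation, ← star_timeEvolution hH,
    ContinuousLinearMap.star_eq_adjoint, ContinuousLinearMap.adjoint_inner_right,
    inner_conj_symm]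

lemma integrable_norm_autocorrelation_sq {ψ : 𝓗} (hT : sojournTime H ψ ≠ ⊤) :
    Integrable fun t => ‖autocorrelation H ψ t‖ ^ 2 := by
  refine ⟨(differentiable_autocorrelation H ψ).continuous.norm.pow 2 |>.aestronglyMeasurable, ?_⟩
  rw [hasFiniteIntegral_iff_ofReal (ae_of_all _ fun t => by positivity)]
  exact hT.lt_top

lemma memLp_autocorrelation {ψ : 𝓗} (hT : sojournTime H ψ ≠ ⊤) :
    MemLp (autocorrelation H ψ) 2 :=
  (memLp_two_iff_integrable_sq_norm
    (differentiable_autocorrelation H ψ).continuous.aestronglyMeasurable).2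
    (integrable_norm_autocorrelation_sq hT)

lemma sojournTime_eq_ofReal_integral {ψ : 𝓗} (hT : sojournTime H ψ ≠ ⊤) :
    sojournTime H ψ = ENNReal.ofReal (∫ t, ‖autocorrelation H ψ t‖ ^ 2) :=
  (ofReal_integral_eq_lintegral_ofReal (integrable_norm_autocorrelation_sq hT)
    (ae_of_all _ fun t => by positivity)).symm

lemma inner_resolventOp_eq_integral (hH : IsSelfAdjoint H) {z : ℂ} (hz : 0 < z.im) (ψ : 𝓗) :
    ⟪ψ, resolventOp H z ψ⟫_ℂ =
      I * ∫ t in Ioi (0 : ℝ), cexp (I * z * t) * autocorrelation H ψ t := by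
  rw [resolventOp_apply_eq_integral hH hz, inner_smul_right,
    ← integral_inner (integrableOn_cexp_smul_timeEvolution_apply hH hz ψ)]
  simp only [inner_smul_right, autocorrelation]

lemma norm_autocorrelation_le (hH : IsSelfAdjoint H) (ψ : 𝓗) (t : ℝ) :
    ‖autocorrelation H ψ t‖ ≤ ‖ψ‖ ^ 2 := by
  rw [sq]
  nth_rw 2 [← norm_timeEvolution_apply hH t ψ]
  exact norm_inner_le_norm _ _

lemma autocorrelation_not_ae_eq_smul_cauchyAutocorrelation {ψ : 𝓗} (hψ : ψ ≠ 0) (lam : ℝ)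
    {ε : ℝ} (hε : ε ≠ 0) (r : ℂ) :
    ¬ autocorrelation H ψ =ᵐ[volume] r • cauchyAutocorrelation lam ε := by
  intro h
  have heq := ((differentiable_autocorrelation H ψ).continuous.ae_eq_iff_eq volume
    (continuous_const.smul (continuous_cauchyAutocorrelation lam ε))).1 h
  have hr : r ≠ 0 := by
    rintro rfl
    simpa [hψ] using congrFun heq 0
  refine not_differentiableAt_cauchyAutocorrelation_zero lam ε hε ?_
  have hk : cauchyAutocorrelation lam ε = r⁻¹ • autocorrelation H ψ := by
    funext t
    simp [heq, hr]
  rw [hk]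
  exact ((differentiable_autocorrelation H ψ).const_smul r⁻¹).differentiableAt

lemma integral_inner_cauchyAutocorrelation_autocorrelation (hH : IsSelfAdjoint H) (ψ : 𝓗)
    (lam : ℝ) {ε : ℝ} (hε : 0 < ε) :
    ∫ t, ⟪cauchyAutocorrelation lam ε t, autocorrelation H ψ t⟫_ℂ =
      (2 * (⟪ψ, resolventOp H (lam + ε * I) ψ⟫_ℂ).im : ℝ) := by
  have hint : Integrable fun t => ⟪cauchyAutocorrelation lam ε t, autocorrelation H ψ t⟫_ℂ := by
    refine ((integrable_exp_neg_mul_abs hε).mul_const (‖ψ‖ ^ 2)).mono' ?_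
      (ae_of_all _ fun t => (norm_inner_le_norm _ _).trans ?_)
    · exact ((continuous_cauchyAutocorrelation lam ε).inner
        (differentiable_autocorrelation H ψ).continuous).aestronglyMeasurable
    · rw [norm_cauchyAutocorrelation]
      gcongr
      exact norm_autocorrelation_le hH ψ t
  rw [integral_eq_two_mul_re_integral_Ioi hint fun t => ?_,
    inner_resolventOp_eq_integral hH (by simpa using hε)]
  · have hIoi : ∫ t in Ioi (0 : ℝ), ⟪cauchyAutocorrelation lam ε t, autocorrelation H ψ t⟫_ℂ =
        ∫ t in Ioi (0 : ℝ), cexp (I * (lam + ε * I) * t) * autocorrelation H ψ t :=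
      setIntegral_congr_fun measurableSet_Ioi fun t ht => by
        rw [RCLike.inner_apply, conj_cauchyAutocorrelation_of_nonneg lam ε ht.le, mul_comm]
    rw [hIoi]
    simp [mul_im]
  · simp [RCLike.inner_apply, autocorrelation_neg hH, cauchyAutocorrelation_neg]

end Operator

theorem sojournTime_lower_bound_strict_general (H : 𝓗 →L[ℂ] 𝓗) (hH : IsSelfAdjoint H)
    (ψ : 𝓗) (hψ : ‖ψ‖ = 1) (lam ε : ℝ) (hε : 0 < ε) :
    ENNReal.ofReal ((1 / ε) *
        (2 * ε * (inner ℂ ψ (resolventOp H ((lam : ℂ) + (ε : ℂ) * Complex.I) ψ) : ℂ).im) ^ 2)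
      < sojournTime H ψ := by
  obtain hT | hT := eq_or_ne (sojournTime H ψ) ⊤
  · simp [hT]
  have hψ₀ : ψ ≠ 0 := norm_ne_zero_iff.mp (by simp [hψ])
  have hCS := norm_integral_inner_sq_lt (memLp_cauchyAutocorrelation lam ε hε)
    (memLp_autocorrelation hT) (cauchyAutocorrelation_not_ae_eq_zero lam ε)
    (autocorrelation_not_ae_eq_smul_cauchyAutocorrelation hψ₀ lam hε.ne')
  rw [integral_inner_cauchyAutocorrelation_autocorrelation hH ψ lam hε,
    integral_norm_cauchyAutocorrelation_sq lam ε hε, norm_real, Real.norm_eq_abs, sq_abs] at hCS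
  rw [sojournTime_eq_ofReal_integral hT, ENNReal.ofReal_lt_ofReal_iff_of_nonneg (by positivity)]
  calc _ = ε * (2 * (⟪ψ, resolventOp H (lam + ε * I) ψ⟫_ℂ).im) ^ 2 := by
        field_simp
    _ < ε * (1 / ε * ∫ t, ‖autocorrelation H ψ t‖ ^ 2) := by gcongr
    _ = _ := by field_simp

/-- For a bounded self-adjoint `H`, unit vector `ψ`, `λ ∈ ℝ`, `ε > 0`,
the inequality `𝒯(H,ψ) ≥ (1/ε)·(2ε·Im⟨ψ, (H−λ−iε)⁻¹ψ⟩)²` is always strict whenever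
`𝒯(H,ψ)` is finite: equality can never hold for a bounded (hence semibounded)
Hamiltonian. -/
theorem sojournTime_lower_bound_strict (H : 𝓗 →L[ℂ] 𝓗) (hH : IsSelfAdjoint H)
    (ψ : 𝓗) (hψ : ‖ψ‖ = 1) (lam ε : ℝ) (hε : 0 < ε)
    (hfin : sojournTime H ψ ≠ ⊤) :
    ENNReal.ofReal ((1 / ε) *
        (2 * ε * (inner ℂ ψ (resolventOp H ((lam : ℂ) + (ε : ℂ) * Complex.I) ψ) : ℂ).im) ^ 2)
      < sojournTime H ψ :=
  sojournTime_lower_bound_strict_general H hH ψ hψ lam ε hε
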